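/- arXiv:1602.07195 — 3 statements merged into one kernel-verified Lean document; each statement's English description precedes it below -/
import Mathlib

section
/- Let 0 < β < 1 and α ∈ (0,1). There exists a constant C > 0 (depending only on β and α) such that for all natural numbers n, m ≥ 1 and k ≥ 1 with mk ≤ αn, the ratio of Zipf tail sums satisfies (Σ_{i=k}^{n} i^{−β}) / (Σ_{i=mk+1}^{n} i^{−β}) ≤ C. -/
open Real Finset

/-! The numerator is at most `∑_{i ≤ n} i^{-β} ≤ n^{1-β} / (1-β)`, by telescoping the tangent-line
inequality for the concave map `x ↦ x^{1-β}`. The denominator has at least `(1-α) n` terms, each at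
least `n^{-β}`, so it is at least `(1-α) n^{1-β}`. Hence `C = 1 / ((1-β)(1-α))` works. -/

lemma rpow_add_mul_rpow_sub_one_le {p x : ℝ} (hp0 : 0 ≤ p) (hp1 : p ≤ 1) (hx : 0 ≤ x) :
    x ^ p + p * (x + 1) ^ (p - 1) ≤ (x + 1) ^ p := by
  set y := x + 1
  have hy : 0 < y := by positivity
  have hbern : (x / y) ^ p ≤ 1 + p * -(1 / y) := by
    convert rpow_one_add_le_one_add_mul_self (s := -(1 / y)) ?_ hp0 hp1 using 2
    · field_simp; ring
    · rw [neg_le_neg_iff, div_le_one hy]; linarith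
  rw [← le_sub_iff_add_le]
  calc x ^ p = (x / y) ^ p * y ^ p := by
        rw [← mul_rpow (by positivity) hy.le, div_mul_cancel₀ _ hy.ne']
    _ ≤ (1 + p * -(1 / y)) * y ^ p := by gcongr
    _ = y ^ p - p * y ^ (p - 1) := by rw [rpow_sub_one hy.ne']; field_simp; ring

lemma sum_Icc_rpow_neg_le {β : ℝ} (hβ0 : 0 ≤ β) (hβ1 : β < 1) (n : ℕ) :
    ∑ i ∈ Icc 1 n, (i : ℝ) ^ (-β) ≤ (n : ℝ) ^ (1 - β) / (1 - β) := by
  have h1β : 0 < 1 - β := by linarith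
  induction n with
  | zero => simp; positivity
  | succ n ih =>
    have hstep := rpow_add_mul_rpow_sub_one_le h1β.le (by linarith) (Nat.cast_nonneg (α := ℝ) n)
    rw [sum_Icc_succ_top (by omega), Nat.cast_succ, le_div_iff₀ h1β]
    rw [le_div_iff₀ h1β] at ih
    rw [show 1 - β - 1 = -β by ring] at hstep
    linarith

lemma sub_mul_rpow_neg_le_sum_Icc {β : ℝ} (hβ : 0 ≤ β) (a n : ℕ) :
    ((n : ℝ) - a) * (n : ℝ) ^ (-β) ≤ ∑ i ∈ Icc (a + 1) n, (i : ℝ) ^ (-β) := by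
  have hcard : (n : ℝ) - a ≤ #(Icc (a + 1) n) := by
    rw [Nat.card_Icc]
    rcases le_total a n with h | h
    · rw [Nat.add_sub_add_right, Nat.cast_sub h]
    · rw [Nat.sub_eq_zero_of_le (by omega)]; simpa using h
  calc ((n : ℝ) - a) * (n : ℝ) ^ (-β) ≤ #(Icc (a + 1) n) * (n : ℝ) ^ (-β) := by gcongr
    _ ≤ ∑ i ∈ Icc (a + 1) n, (i : ℝ) ^ (-β) := by
      rw [← nsmul_eq_mul]
      refine card_nsmul_le_sum _ _ _ fun i hi ↦ ?_
      rw [mem_Icc] at hi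
      exact rpow_le_rpow_of_nonpos (by norm_cast; omega) (by exact_mod_cast hi.2) (by linarith)

lemma one_sub_mul_rpow_le_sum_Icc {α β : ℝ} (hβ0 : 0 ≤ β) (hβ1 : β < 1) {a n : ℕ}
    (ha : (a : ℝ) ≤ α * n) :
    (1 - α) * (n : ℝ) ^ (1 - β) ≤ ∑ i ∈ Icc (a + 1) n, (i : ℝ) ^ (-β) := by
  have hsplit : (n : ℝ) ^ (1 - β) = n * (n : ℝ) ^ (-β) := by
    rw [sub_eq_add_neg, rpow_add' n.cast_nonneg (by linarith), rpow_one]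
  calc (1 - α) * (n : ℝ) ^ (1 - β) ≤ ((n : ℝ) - a) * (n : ℝ) ^ (-β) := by
        rw [hsplit, ← mul_assoc]; gcongr; linarith
    _ ≤ _ := sub_mul_rpow_neg_le_sum_Icc hβ0 a n

theorem zipf_ratio_beta_lt_one_general (β α : ℝ) (hβ0 : 0 < β) (hβ1 : β < 1)
    (hα1 : α < 1) :
    ∃ C : ℝ, 0 < C ∧ ∀ n m k : ℕ, 1 ≤ m → 1 ≤ k → (m : ℝ) * k ≤ α * n →
      (∑ i ∈ Finset.Icc k n, (i : ℝ) ^ (-β)) /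
          (∑ i ∈ Finset.Icc (m * k + 1) n, (i : ℝ) ^ (-β)) ≤ C := by
  have h1β : 0 < 1 - β := by linarith
  have h1α : 0 < 1 - α := by linarith
  refine ⟨1 / ((1 - β) * (1 - α)), by positivity, fun n m k hm hk hmk ↦ ?_⟩
  have hmk1 : (1 : ℝ) ≤ m * k := by exact_mod_cast Nat.mul_le_mul hm hk
  have hn : 0 < n := Nat.pos_of_ne_zero fun h ↦ by simp [h] at hmk; linarith
  have hden := one_sub_mul_rpow_le_sum_Icc hβ0.le hβ1 (a := m * k) (by exact_mod_cast hmk)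
  have hnum : ∑ i ∈ Icc k n, (i : ℝ) ^ (-β) ≤ (n : ℝ) ^ (1 - β) / (1 - β) :=
    (sum_le_sum_of_subset_of_nonneg (Icc_subset_Icc_left hk) fun i _ _ ↦ by positivity).trans
      (sum_Icc_rpow_neg_le hβ0.le hβ1 n)
  rw [div_le_iff₀ (lt_of_lt_of_le (by positivity) hden)]
  calc ∑ i ∈ Icc k n, (i : ℝ) ^ (-β) ≤ (n : ℝ) ^ (1 - β) / (1 - β) := hnum
    _ = 1 / ((1 - β) * (1 - α)) * ((1 - α) * (n : ℝ) ^ (1 - β)) := by field_simp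
    _ ≤ _ := by gcongr

/-- Zipf tail-sum ratio bound for `0 < β < 1`: there is a constant `C > 0` depending only
on `β` and `α` such that for all `n`, `m ≥ 1`, `k ≥ 1` with `mk ≤ αn`,
`(∑_{i=k}^n i^{−β}) / (∑_{i=mk+1}^n i^{−β}) ≤ C`. -/
theorem zipf_ratio_beta_lt_one (β α : ℝ) (hβ0 : 0 < β) (hβ1 : β < 1)
    (hα0 : 0 < α) (hα1 : α < 1) :
    ∃ C : ℝ, 0 < C ∧ ∀ n m k : ℕ, 1 ≤ m → 1 ≤ k → (m : ℝ) * k ≤ α * n →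
      (∑ i ∈ Finset.Icc k n, (i : ℝ) ^ (-β)) /
          (∑ i ∈ Finset.Icc (m * k + 1) n, (i : ℝ) ^ (-β)) ≤ C :=
  zipf_ratio_beta_lt_one_general β α hβ0 hβ1 hα1
end

section
/- Let β > 1. There exist K and N such that for all k ≥ K and all n ≥ N with ⌊k/(log log k)^{1/β}⌋ + 1 ≤ n, setting ℓ = ⌊k/(log log k)^{1/β}⌋ + 1, the normalized Zipf tail satisfies (Σ_{i=ℓ}^{n} i^{−β}) / (Σ_{i=1}^{n} i^{−β}) ≤ (1/0.9) · (log log k)^{1 − 1/β} / k^{β−1}. -/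
/-!
Comparing the decreasing function `t ↦ t ^ (-β)` with its integral bounds the tail
`∑_{i=ℓ}^n i^{-β}` by `ℓ^{-β} + ℓ^{1-β}/(β-1)` and the full sum from below by
`(1 - (n+1)^{1-β})/(β-1)`, so the tail ratio is at most
`(1 + (β-1)/ℓ) / (1 - (n+1)^{1-β}) · ℓ^{1-β}`. The prefactor tends to `1 < 1/0.9` as
`ℓ` and `n` grow, and `ℓ` exceeds `x = k/(log log k)^{1/β}`, which tends to infinity,
while `x^{1-β} = (log log k)^{1-1/β}/k^{β-1}`.
-/

open Real Filter Finset Topology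

theorem integral_rpow_neg_eq {β a b : ℝ} (hβ : β ≠ 1) (ha : 0 < a) (hb : 0 < b) :
    ∫ x in a..b, x ^ (-β) = (a ^ (1 - β) - b ^ (1 - β)) / (β - 1) := by
  have h0 : (0 : ℝ) ∉ Set.uIcc a b := by
    rw [Set.mem_uIcc]; rintro (⟨h, -⟩ | ⟨h, -⟩) <;> linarith
  rw [integral_rpow (Or.inr ⟨by contrapose! hβ; linarith, h0⟩), neg_add_eq_sub,
    ← neg_sub β 1, div_neg, ← neg_div, neg_sub]

theorem antitoneOn_rpow_neg_Icc {β a : ℝ} (hβ : 0 ≤ β) (ha : 0 < a) (b : ℝ) :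
    AntitoneOn (fun x : ℝ => x ^ (-β)) (Set.Icc a b) :=
  (antitoneOn_rpow_Ioi_of_exponent_nonpos (neg_nonpos.2 hβ)).mono fun _ hx => ha.trans_le hx.1

theorem sum_Icc_rpow_neg_ge {β : ℝ} (hβ₀ : 0 ≤ β) (hβ₁ : β ≠ 1) {a b : ℕ} (ha : 0 < a)
    (hab : a ≤ b + 1) :
    ((a : ℝ) ^ (1 - β) - ((b : ℝ) + 1) ^ (1 - β)) / (β - 1) ≤
      ∑ i ∈ Icc a b, (i : ℝ) ^ (-β) := by
  have key := (antitoneOn_rpow_neg_Icc hβ₀ (Nat.cast_pos.2 ha) _).integral_le_sum_Ico hab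
  rwa [integral_rpow_neg_eq hβ₁ (by positivity) (by positivity), Finset.Ico_add_one_right_eq_Icc,
    Nat.cast_add_one] at key

theorem sum_Ioc_rpow_neg_le {β : ℝ} (hβ₀ : 0 ≤ β) (hβ₁ : β ≠ 1) {a b : ℕ} (ha : 0 < a)
    (hab : a ≤ b) :
    ∑ i ∈ Ioc a b, (i : ℝ) ^ (-β) ≤ ((a : ℝ) ^ (1 - β) - (b : ℝ) ^ (1 - β)) / (β - 1) := by
  have ha' : (0 : ℝ) < a := Nat.cast_pos.2 ha
  have key := (antitoneOn_rpow_neg_Icc hβ₀ ha' _).sum_le_integral_Ico hab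
  rw [integral_rpow_neg_eq hβ₁ ha' (ha'.trans_le (Nat.cast_le.2 hab)),
    Finset.sum_Ico_add' (fun i : ℕ => (i : ℝ) ^ (-β)), Finset.Ico_add_one_add_one_eq_Ioc] at key
  exact key

theorem zipf_tail_ratio_le {β : ℝ} (hβ : 1 < β) {ℓ n : ℕ} (hℓ : 0 < ℓ) (hℓn : ℓ ≤ n) :
    (∑ i ∈ Icc ℓ n, (i : ℝ) ^ (-β)) / (∑ i ∈ Icc 1 n, (i : ℝ) ^ (-β)) ≤
      (1 + (β - 1) / ℓ) / (1 - ((n : ℝ) + 1) ^ (1 - β)) * (ℓ : ℝ) ^ (1 - β) := by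
  have hβ₀ : 0 ≤ β := by linarith
  have hβ₁ : 0 < β - 1 := by linarith
  have hℓ' : (0 : ℝ) < ℓ := Nat.cast_pos.2 hℓ
  have hnum : ∑ i ∈ Icc ℓ n, (i : ℝ) ^ (-β) ≤ (1 + (β - 1) / ℓ) * (ℓ : ℝ) ^ (1 - β) / (β - 1) := by
    rw [← add_sum_Ioc_eq_sum_Icc hℓn]
    have htail := sum_Ioc_rpow_neg_le hβ₀ hβ.ne' hℓ hℓn
    have hn_pow : (0 : ℝ) ≤ (n : ℝ) ^ (1 - β) := by positivity
    have hhead : (ℓ : ℝ) ^ (-β) = (ℓ : ℝ) ^ (1 - β) / ℓ := by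
      rw [← rpow_sub_one hℓ'.ne']; ring_nf
    calc (ℓ : ℝ) ^ (-β) + ∑ i ∈ Ioc ℓ n, (i : ℝ) ^ (-β)
        ≤ (ℓ : ℝ) ^ (1 - β) / ℓ + (ℓ : ℝ) ^ (1 - β) / (β - 1) := by
          rw [hhead]; gcongr; exact htail.trans (by gcongr; linarith)
      _ = (1 + (β - 1) / ℓ) * (ℓ : ℝ) ^ (1 - β) / (β - 1) := by field_simp; ring
  have hden : (1 - ((n : ℝ) + 1) ^ (1 - β)) / (β - 1) ≤ ∑ i ∈ Icc 1 n, (i : ℝ) ^ (-β) := by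
    simpa using sum_Icc_rpow_neg_ge hβ₀ hβ.ne' one_pos (by omega : 1 ≤ n + 1)
  have hmass : 0 < 1 - ((n : ℝ) + 1) ^ (1 - β) := by
    have : (1 : ℝ) < n + 1 := by
      have : (0 : ℝ) < n := Nat.cast_pos.2 (hℓ.trans_le hℓn)
      linarith
    linarith [rpow_lt_one_of_one_lt_of_neg this (by linarith : 1 - β < 0)]
  calc _ ≤ (1 + (β - 1) / ℓ) * (ℓ : ℝ) ^ (1 - β) / (β - 1) /
        ((1 - ((n : ℝ) + 1) ^ (1 - β)) / (β - 1)) :=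
        div_le_div₀ (by positivity) hnum (div_pos hmass hβ₁) hden
    _ = _ := by field_simp

theorem tendsto_div_log_atTop : Tendsto (fun x : ℝ => x / log x) atTop atTop := by
  refine ((tendsto_exp_div_pow_atTop 1).comp tendsto_log_atTop).congr' ?_
  filter_upwards [eventually_gt_atTop 0] with x hx
  simp [exp_log hx]

theorem rpow_log_log_le_log {β x : ℝ} (hβ : 1 ≤ β) (hx : 1 < log x) :
    log (log x) ^ (1 / β) ≤ log x := by
  have hL : 0 < log (log x) := log_pos hx
  have hLx : log (log x) < log x := by linarith [log_le_sub_one_of_pos (by linarith : 0 < log x)]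
  rcases le_or_gt (log (log x)) 1 with hL1 | hL1
  · exact (rpow_le_one hL.le hL1 (by positivity)).trans hx.le
  · calc log (log x) ^ (1 / β) ≤ log (log x) ^ (1 : ℝ) :=
          rpow_le_rpow_of_exponent_le hL1.le ((div_le_one (by linarith)).2 hβ)
      _ ≤ log x := by rw [rpow_one]; exact hLx.le

theorem tendsto_div_rpow_log_log_atTop {β : ℝ} (hβ : 1 ≤ β) :
    Tendsto (fun x : ℝ => x / log (log x) ^ (1 / β)) atTop atTop := by
  refine tendsto_atTop_mono' _ ?_ tendsto_div_log_atTop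
  filter_upwards [tendsto_log_atTop.eventually_gt_atTop 1, eventually_gt_atTop 0] with x hx hx₀
  exact div_le_div_of_nonneg_left hx₀.le (rpow_pos_of_pos (log_pos hx) _)
    (rpow_log_log_le_log hβ hx)

theorem div_rpow_one_div_rpow_one_sub {β k L : ℝ} (hβ : β ≠ 0) (hk : 0 < k) (hL : 0 < L) :
    (k / L ^ (1 / β)) ^ (1 - β) = L ^ (1 - 1 / β) / k ^ (β - 1) := by
  rw [div_rpow hk.le (by positivity), ← rpow_mul hL.le, show 1 / β * (1 - β) = -(1 - 1 / β) by
    field_simp; ring, rpow_neg hL.le, show 1 - β = -(β - 1) by ring, rpow_neg hk.le]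
  field_simp

/-- Tail-mass estimate in Lemma 4 of the paper: for `β > 1` there exist `K`, `N` such
that for all `k ≥ K`, `n ≥ N` with `ℓ = ⌊k/(log log k)^{1/β}⌋ + 1 ≤ n`, the normalized
Zipf tail satisfies
`(∑_{i=ℓ}^n i^{−β}) / (∑_{i=1}^n i^{−β}) ≤ (1/0.9) · (log log k)^{1−1/β} / k^{β−1}`. -/
theorem zipf_unpopular_mass (β : ℝ) (hβ : 1 < β) :
    ∃ K N : ℕ, ∀ k n : ℕ, K ≤ k → N ≤ n →
      let ℓ : ℕ := ⌊(k : ℝ) / (Real.log (Real.log k)) ^ (1 / β)⌋₊ + 1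
      ℓ ≤ n →
        (∑ i ∈ Finset.Icc ℓ n, (i : ℝ) ^ (-β)) /
            (∑ i ∈ Finset.Icc 1 n, (i : ℝ) ^ (-β)) ≤
          (1 / 0.9) * (Real.log (Real.log k)) ^ (1 - 1 / β) / (k : ℝ) ^ (β - 1) := by
  have hβ₁ : 0 < β - 1 := by linarith
  -- `(1 + 1/21) / (1 - 1/21) = 1.1 ≤ 1/0.9`
  have hk : ∀ᶠ k : ℕ in atTop, 21 * (β - 1) ≤ (k : ℝ) / log (log k) ^ (1 / β) ∧ 1 < log (k : ℝ) :=
    (((tendsto_div_rpow_log_log_atTop hβ.le).comp tendsto_natCast_atTop_atTop).eventually_ge_atTop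
      _).and ((tendsto_log_atTop.comp tendsto_natCast_atTop_atTop).eventually_gt_atTop 1)
  have hn : ∀ᶠ n : ℕ in atTop, ((n : ℝ) + 1) ^ (1 - β) < 1 / 21 := by
    refine (tendsto_order.1 ?_).2 _ (by norm_num : (0 : ℝ) < 1 / 21)
    simpa only [neg_sub, Function.comp_def] using (tendsto_rpow_neg_atTop hβ₁).comp
      (tendsto_atTop_add_const_right _ 1 tendsto_natCast_atTop_atTop)
  obtain ⟨K, hK⟩ := eventually_atTop.1 hk
  obtain ⟨N, hN⟩ := eventually_atTop.1 hn
  refine ⟨K, N, fun k n hkK hnN => ?_⟩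
  intro ℓ hℓn
  obtain ⟨hx, hk₁⟩ := hK k hkK
  set x : ℝ := k / log (log k) ^ (1 / β)
  have hxℓ : x < ℓ := by exact_mod_cast Nat.lt_floor_add_one x
  have hx₀ : 0 < x := by linarith
  have hk₀ : (0 : ℝ) < k := Nat.cast_pos.2 (Nat.pos_of_ne_zero fun h => by norm_num [h] at hk₁)
  have hfactor : (1 + (β - 1) / ℓ) / (1 - ((n : ℝ) + 1) ^ (1 - β)) ≤ 1 / 0.9 := by
    have hn₁ := hN n hnN
    have : (β - 1) / ℓ ≤ 1 / 21 := by
      rw [div_le_iff₀ (hx₀.trans hxℓ)]; linarith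
    rw [div_le_iff₀ (by linarith)]; linarith
  calc _ ≤ (1 + (β - 1) / ℓ) / (1 - ((n : ℝ) + 1) ^ (1 - β)) * (ℓ : ℝ) ^ (1 - β) :=
        zipf_tail_ratio_le hβ (Nat.succ_pos _) hℓn
    _ ≤ 1 / 0.9 * x ^ (1 - β) :=
        mul_le_mul hfactor (rpow_le_rpow_of_nonpos hx₀ hxℓ.le (by linarith)) (by positivity)
          (by norm_num)
    _ = _ := by
        rw [div_rpow_one_div_rpow_one_sub (by linarith) hk₀ (log_pos hk₁), mul_div_assoc]
end

section
/- Let β > 1. There exist c > 0 and K such that the following holds for all k ≥ K and all n ≥ k. Let p be the Zipf(β, n) probability mass function on {1,…,n} (p_i = i^{−β}/Σ_{j=1}^n j^{−β}), let N = ⌊k^{β}/log log k⌋, let M = ⌊k/(log k)^{2/β}⌋, and let X_1, …, X_N be i.i.d. random variables each with law p (i.e., consider the N-fold product of the measure induced by p). Then the probability that there exists i ∈ {1,…,M} such that X_t ≠ i for every t ∈ {1,…,N} is at most k · exp(−c · (log k)^{2} / log log k). -/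
/-! Each of the `M` most popular contents has probability at least
`M^{-β}/ζ(β) ≥ (log k)²/(ζ(β) k^β)`, where `ζ(β) = ∑ j^{-β}` bounds every normalising sum, and
`N ≥ k^β/(2 log log k)`. So such a content is missed by all `N` requests with probability
`(1 - p_i)^N ≤ exp(-p_i N) ≤ exp(-(log k)²/(2ζ(β) log log k))`, and a union bound over the
`M ≤ k` contents gives the claim with `c = 1/(2ζ(β))`. -/

open MeasureTheory

/-- The Zipf(β, n) probability of content `i`: `i^{−β}/∑_{j=1}^n j^{−β}` for
`i ∈ {1,…,n}` and `0` otherwise. -/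
noncomputable def zipfP (β : ℝ) (n : ℕ) (i : ℕ) : ℝ :=
  if i ∈ Finset.Icc 1 n then
    (i : ℝ) ^ (-β) / (∑ j ∈ Finset.Icc 1 n, (j : ℝ) ^ (-β)) else 0

/-- The measure on `ℕ` induced by the Zipf(β, n) probability mass function. -/
noncomputable def zipfMeasure (β : ℝ) (n : ℕ) : Measure ℕ :=
  Measure.sum fun i => ENNReal.ofReal (zipfP β n i) • Measure.dirac i

open Finset Real

section NeverRequested

variable {α ι : Type*} [MeasurableSpace α] [MeasurableSingletonClass α] [Fintype ι]
  (μ : Measure α) [IsProbabilityMeasure μ]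

theorem measure_pi_forall_ne_le (a : α) :
    Measure.pi (fun _ : ι => μ) {x | ∀ t, x t ≠ a} ≤
      ENNReal.ofReal (exp (-(μ.real {a} * Fintype.card ι))) := by
  have hset : {x : ι → α | ∀ t, x t ≠ a} = Set.univ.pi fun _ => ({a}ᶜ : Set α) := by
    ext x; simp [Set.mem_pi]
  have hcompl : μ {a}ᶜ = ENNReal.ofReal (1 - μ.real {a}) := by
    rw [← probReal_compl_eq_one_sub (measurableSet_singleton a), ofReal_measureReal]
  calc Measure.pi (fun _ : ι => μ) {x | ∀ t, x t ≠ a}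
      = ENNReal.ofReal (1 - μ.real {a}) ^ Fintype.card ι := by
        rw [hset, Measure.pi_pi, prod_const, card_univ, hcompl]
    _ ≤ ENNReal.ofReal (exp (-μ.real {a})) ^ Fintype.card ι := by
        gcongr; exact one_sub_le_exp_neg _
    _ = ENNReal.ofReal (exp (-(μ.real {a} * Fintype.card ι))) := by
        rw [← ENNReal.ofReal_pow (exp_nonneg _), ← exp_nat_mul]
        ring_nf

theorem measure_pi_exists_forall_ne_le (s : Finset α) {τ : ℝ}
    (hτ : ∀ a ∈ s, τ ≤ μ.real {a} * Fintype.card ι) :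
    Measure.pi (fun _ : ι => μ) {x | ∃ a ∈ s, ∀ t, x t ≠ a} ≤
      #s * ENNReal.ofReal (exp (-τ)) := by
  have hset : {x : ι → α | ∃ a ∈ s, ∀ t, x t ≠ a} = ⋃ a ∈ s, {x | ∀ t, x t ≠ a} := by
    ext x; simp
  calc Measure.pi (fun _ : ι => μ) {x | ∃ a ∈ s, ∀ t, x t ≠ a}
      ≤ ∑ a ∈ s, Measure.pi (fun _ : ι => μ) {x | ∀ t, x t ≠ a} :=
        hset ▸ measure_biUnion_finset_le _ _
    _ ≤ ∑ _a ∈ s, ENNReal.ofReal (exp (-τ)) := by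
        refine sum_le_sum fun a ha => (measure_pi_forall_ne_le μ a).trans ?_
        gcongr
        exact hτ a ha
    _ = #s * ENNReal.ofReal (exp (-τ)) := by
        rw [sum_const, nsmul_eq_mul]

end NeverRequested

section Zipf

variable (β : ℝ) (n : ℕ)

theorem sum_Icc_rpow_neg_pos (hn : 1 ≤ n) : 0 < ∑ j ∈ Icc 1 n, (j : ℝ) ^ (-β) :=
  sum_pos (fun j hj => rpow_pos_of_pos (by exact_mod_cast (mem_Icc.mp hj).1) _)
    ⟨1, mem_Icc.mpr ⟨le_rfl, hn⟩⟩

theorem zipfP_nonneg (i : ℕ) : 0 ≤ zipfP β n i := by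
  unfold zipfP
  split_ifs with hi
  · exact div_nonneg (rpow_nonneg i.cast_nonneg _)
      (sum_nonneg fun j _ => rpow_nonneg j.cast_nonneg _)
  · exact le_rfl

theorem sum_zipfP (hn : 1 ≤ n) : ∑ i ∈ Icc 1 n, zipfP β n i = 1 := by
  simp only [zipfP]
  rw [sum_ite_of_true fun _ hi => hi, ← sum_div, div_self (sum_Icc_rpow_neg_pos β n hn).ne']

theorem zipfMeasure_singleton (i : ℕ) : zipfMeasure β n {i} = ENNReal.ofReal (zipfP β n i) := by
  simp [zipfMeasure, Set.indicator_apply]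

theorem zipfMeasure_real_singleton (i : ℕ) : (zipfMeasure β n).real {i} = zipfP β n i := by
  rw [measureReal_def, zipfMeasure_singleton, ENNReal.toReal_ofReal (zipfP_nonneg β n i)]

theorem isProbabilityMeasure_zipfMeasure (hn : 1 ≤ n) : IsProbabilityMeasure (zipfMeasure β n) := by
  constructor
  have hsupp : ∀ i ∉ Icc 1 n, ENNReal.ofReal (zipfP β n i) = 0 := fun i hi => by
    simp [zipfP, hi]
  simp only [zipfMeasure, Measure.sum_apply _ MeasurableSet.univ, Measure.smul_apply,
    measure_univ, smul_eq_mul, mul_one]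
  rw [tsum_eq_sum hsupp, ← ENNReal.ofReal_sum_of_nonneg fun i _ => zipfP_nonneg β n i,
    sum_zipfP β n hn, ENNReal.ofReal_one]

theorem tsum_nat_rpow_neg_pos (hβ : 1 < β) : 0 < ∑' j : ℕ, (j : ℝ) ^ (-β) := by
  refine lt_of_lt_of_le ?_ ((summable_nat_rpow.mpr (by linarith)).le_tsum 1
    fun j _ => rpow_nonneg j.cast_nonneg _)
  simp

theorem rpow_neg_div_tsum_le_zipfP (hβ : 1 < β) {i : ℕ} (hi : i ∈ Icc 1 n) :
    (i : ℝ) ^ (-β) / ∑' j : ℕ, (j : ℝ) ^ (-β) ≤ zipfP β n i := by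
  rw [zipfP, if_pos hi]
  have hn : 1 ≤ n := (mem_Icc.mp hi).1.trans (mem_Icc.mp hi).2
  exact div_le_div_of_nonneg_left (rpow_nonneg i.cast_nonneg _) (sum_Icc_rpow_neg_pos β n hn)
    ((summable_nat_rpow.mpr (by linarith)).sum_le_tsum _ fun j _ => rpow_nonneg j.cast_nonneg _)

end Zipf

section Asymptotics

variable {β : ℝ} {k : ℕ}

theorem floor_div_log_rpow_le (hβ : 0 < β) (hk : 1 ≤ log k) :
    ⌊(k : ℝ) / log k ^ (2 / β)⌋₊ ≤ k := by
  refine Nat.floor_le_of_le (div_le_self k.cast_nonneg ?_)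
  exact one_le_rpow hk (by positivity)

theorem log_sq_div_rpow_le_rpow_neg (hβ : 0 < β) (hk : 0 < log k) {i : ℕ} (hi : 1 ≤ i)
    (hiM : i ≤ ⌊(k : ℝ) / log k ^ (2 / β)⌋₊) :
    log k ^ 2 / (k : ℝ) ^ β ≤ (i : ℝ) ^ (-β) := by
  have hk0 : (0 : ℝ) < k := zero_lt_one.trans ((log_pos_iff k.cast_nonneg).mp hk)
  have hix : (i : ℝ) ≤ k / log k ^ (2 / β) :=
    (Nat.le_floor_iff (by positivity)).mp hiM
  calc log k ^ 2 / (k : ℝ) ^ β = ((k : ℝ) / log k ^ (2 / β)) ^ (-β) := by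
        rw [div_rpow hk0.le (by positivity), ← rpow_mul hk.le, mul_neg, div_mul_cancel₀ _ hβ.ne',
          rpow_neg hk0.le, rpow_neg hk.le, inv_div_inv, rpow_two]
    _ ≤ (i : ℝ) ^ (-β) := rpow_le_rpow_of_nonpos (by exact_mod_cast hi) hix (by linarith)

theorem rpow_div_two_log_log_le_floor (hβ : 1 ≤ β) (hk : 1 < log k) :
    (k : ℝ) ^ β / (2 * log (log k)) ≤ ⌊(k : ℝ) ^ β / log (log k)⌋₊ := by
  have hL : 0 < log (log k) := log_pos hk
  have hk1 : (1 : ℝ) ≤ k := ((log_pos_iff k.cast_nonneg).mp (by linarith)).le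
  have hLk : log (log k) ≤ (k : ℝ) ^ β :=
    calc log (log k) ≤ log k := log_le_self (by linarith)
      _ ≤ k := log_le_self k.cast_nonneg
      _ ≤ (k : ℝ) ^ β := self_le_rpow_of_one_le hk1 hβ
  rw [← div_div, div_right_comm]
  exact (Nat.div_two_lt_floor ((one_le_div hL).mpr hLk)).le

end Asymptotics

theorem log_sq_div_log_log_le_zipfP_mul {β : ℝ} (hβ : 1 < β) {k n : ℕ} (hk : 1 < log k)
    (hkn : k ≤ n) {i : ℕ} (hi : i ∈ Icc 1 ⌊(k : ℝ) / log k ^ (2 / β)⌋₊) :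
    1 / (2 * ∑' j : ℕ, (j : ℝ) ^ (-β)) * log k ^ 2 / log (log k) ≤
      zipfP β n i * ⌊(k : ℝ) ^ β / log (log k)⌋₊ := by
  obtain ⟨hi1, hiM⟩ := mem_Icc.mp hi
  have hβ0 : 0 < β := by linarith
  have hζ := tsum_nat_rpow_neg_pos β hβ
  have hkβ : (0 : ℝ) < (k : ℝ) ^ β :=
    rpow_pos_of_pos (zero_lt_one.trans ((log_pos_iff k.cast_nonneg).mp (by linarith))) _
  have hL : 0 < log (log k) := log_pos hk
  have hin : i ∈ Icc 1 n :=
    mem_Icc.mpr ⟨hi1, hiM.trans ((floor_div_log_rpow_le hβ0 hk.le).trans hkn)⟩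
  calc 1 / (2 * ∑' j : ℕ, (j : ℝ) ^ (-β)) * log k ^ 2 / log (log k)
      = log k ^ 2 / (k : ℝ) ^ β / (∑' j : ℕ, (j : ℝ) ^ (-β)) *
          ((k : ℝ) ^ β / (2 * log (log k))) := by
        field_simp
    _ ≤ (i : ℝ) ^ (-β) / (∑' j : ℕ, (j : ℝ) ^ (-β)) * ⌊(k : ℝ) ^ β / log (log k)⌋₊ :=
        mul_le_mul
          (div_le_div_of_nonneg_right (log_sq_div_rpow_le_rpow_neg hβ0 (by linarith) hi1 hiM)
            hζ.le)
          (rpow_div_two_log_log_le_floor hβ.le hk) (by positivity) (by positivity)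
    _ ≤ zipfP β n i * ⌊(k : ℝ) ^ β / log (log k)⌋₊ := by
        gcongr
        exact rpow_neg_div_tsum_le_zipfP β n hβ hin

/-- Lemma 5 of the paper (event `E₂`): for `β > 1` there are `c > 0` and `K` such that
for `k ≥ K` and `n ≥ k`, in `N = ⌊k^β/log log k⌋` i.i.d. Zipf(β, n) requests (the
`N`-fold product measure), the probability that some one of the `M = ⌊k/(log k)^{2/β}⌋`
most popular contents is never requested is at most
`k · exp(−c·(log k)²/log log k)`. -/
theorem zipf_popular_all_requested (β : ℝ) (hβ : 1 < β) :
    ∃ c : ℝ, 0 < c ∧ ∃ K : ℕ, ∀ k n : ℕ, K ≤ k → k ≤ n →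
      let N : ℕ := ⌊(k : ℝ) ^ β / Real.log (Real.log k)⌋₊
      let M : ℕ := ⌊(k : ℝ) / (Real.log k) ^ (2 / β)⌋₊
      Measure.pi (fun _ : Fin N => zipfMeasure β n)
          {x | ∃ i ∈ Finset.Icc 1 M, ∀ t : Fin N, x t ≠ i} ≤
        ENNReal.ofReal
          ((k : ℝ) * Real.exp (-(c * (Real.log k) ^ 2 / Real.log (Real.log k)))) := by
  have hζ := tsum_nat_rpow_neg_pos β hβ
  refine ⟨1 / (2 * ∑' j : ℕ, (j : ℝ) ^ (-β)), by positivity, 3, fun k n hk hkn => ?_⟩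
  set c := 1 / (2 * ∑' j : ℕ, (j : ℝ) ^ (-β))
  intro N M
  have hlog : 1 < log k := by
    rw [lt_log_iff_exp_lt (by positivity)]
    have hk3 : (3 : ℝ) ≤ k := by exact_mod_cast hk
    exact exp_one_lt_d9.trans_le (by linarith)
  have := isProbabilityMeasure_zipfMeasure β n (by omega)
  calc Measure.pi (fun _ : Fin N => zipfMeasure β n) {x | ∃ i ∈ Icc 1 M, ∀ t : Fin N, x t ≠ i}
      ≤ #(Icc 1 M) * ENNReal.ofReal (exp (-(c * log k ^ 2 / log (log k)))) := by
        refine measure_pi_exists_forall_ne_le _ _ fun i hi => ?_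
        rw [zipfMeasure_real_singleton, Fintype.card_fin]
        exact log_sq_div_log_log_le_zipfP_mul hβ hlog hkn hi
    _ ≤ k * ENNReal.ofReal (exp (-(c * log k ^ 2 / log (log k)))) := by
        gcongr
        rw [Nat.card_Icc, Nat.add_sub_cancel]
        exact floor_div_log_rpow_le (by linarith) hlog.le
    _ = _ := by rw [ENNReal.ofReal_mul k.cast_nonneg, ENNReal.ofReal_natCast]
end
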